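/- Suppose u(s,t₀) = v(s,t₀) = w(s,t₀) = 0 for all s (so r(s) = P(s,t₀) is a parametric curve on the surface), let θ₀ ∈ ℝ, θ(s) = θ₀ − ∫₀ˢ τ(σ) dσ, and n₁(s) = cosh θ(s)·N(s) + sinh θ(s)·B(s). Then n₁(s) is parallel to the surface normal n(s,t₀) for every s (for each s there exists c ≠ 0 with n(s,t₀) = c·n₁(s)) if and only if there exists λ : ℝ → ℝ with λ(s) ≠ 0 for all s such that for all s: φ₁(s) = 0, φ₂(s) = λ(s)·cosh θ(s), φ₃(s) = λ(s)·sinh θ(s), where φ₁ = v_s w_t − w_s v_t, φ₂ = −(1 + u_s)w_t + w_s u_t, φ₃ = −(1 + u_s)v_t + v_s u_t, with partial derivatives evaluated at (s,t₀). -/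

import Mathlib

noncomputable section

/-- Lorentzian inner product on Minkowski 3-space `ℝ₁³`. -/
def minkDot (X Y : ℝ × ℝ × ℝ) : ℝ := X.1 * Y.1 + X.2.1 * Y.2.1 - X.2.2 * Y.2.2

/-- Lorentzian vector product on Minkowski 3-space `ℝ₁³`. -/
def lcross (X Y : ℝ × ℝ × ℝ) : ℝ × ℝ × ℝ :=
  (X.2.1 * Y.2.2 - X.2.2 * Y.2.1, X.2.2 * Y.1 - X.1 * Y.2.2, X.2.1 * Y.1 - X.1 * Y.2.1)

/-- Lorentzian norm `‖X‖ = √|⟨X,X⟩|`. -/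
def mnorm (X : ℝ × ℝ × ℝ) : ℝ := Real.sqrt |minkDot X X|

lemma lcross_comb (X Y Z : ℝ × ℝ × ℝ) (a b c : ℝ) :
    lcross X (a • X + b • Y + c • Z) = b • lcross X Y + c • lcross X Z := by
  simp [lcross, Prod.ext_iff, Prod.smul_def, smul_eq_mul]
  constructor
  · ring
  constructor <;> ring

lemma lcross_anti (X Y : ℝ × ℝ × ℝ) : lcross X Y = -lcross Y X := by
  simp [lcross, Prod.ext_iff]
  constructor
  · ring
  constructor <;> ring

lemma minkDot_symm (X Y : ℝ × ℝ × ℝ) : minkDot X Y = minkDot Y X := by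
  unfold minkDot; ring

lemma minkDot_comb (X Y Z : ℝ × ℝ × ℝ) (a b : ℝ) :
    minkDot (a • X + b • Y) Z = a * minkDot X Z + b * minkDot Y Z := by
  simp [minkDot, Prod.smul_def, smul_eq_mul]
  ring

/-- The curve is a line of curvature iff the marching-scale functions satisfy the
`φ`-conditions with a nonvanishing function `λ`. -/
theorem line_of_curvature_iff_spacelike_timelikeBinormal
    (r T N B : ℝ → ℝ × ℝ × ℝ) (κ τ : ℝ → ℝ)
    (hr : ContDiff ℝ (⊤ : ℕ∞) r) (hT : ContDiff ℝ (⊤ : ℕ∞) T) (hN : ContDiff ℝ (⊤ : ℕ∞) N)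
    (hB : ContDiff ℝ (⊤ : ℕ∞) B) (hκ : ContDiff ℝ (⊤ : ℕ∞) κ) (hτ : ContDiff ℝ (⊤ : ℕ∞) τ)
    (hrT : ∀ s, deriv r s = T s)
    (hT' : ∀ s, deriv T s = κ s • N s)
    (hN' : ∀ s, deriv N s = (-κ s) • T s + τ s • B s)
    (hB' : ∀ s, deriv B s = τ s • N s)
    (hTT : ∀ s, minkDot (T s) (T s) = 1)
    (hNN : ∀ s, minkDot (N s) (N s) = 1)
    (hBB : ∀ s, minkDot (B s) (B s) = -1)
    (hTN : ∀ s, minkDot (T s) (N s) = 0)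
    (hTB : ∀ s, minkDot (T s) (B s) = 0)
    (hNB : ∀ s, minkDot (N s) (B s) = 0)
    (hTxN : ∀ s, lcross (T s) (N s) = -B s)
    (hNxB : ∀ s, lcross (N s) (B s) = T s)
    (hBxT : ∀ s, lcross (B s) (T s) = N s)
    (u v w : ℝ → ℝ → ℝ)
    (hu : ContDiff ℝ (⊤ : ℕ∞) (Function.uncurry u))
    (hv : ContDiff ℝ (⊤ : ℕ∞) (Function.uncurry v))
    (hw : ContDiff ℝ (⊤ : ℕ∞) (Function.uncurry w))
    (t₀ : ℝ) (P n : ℝ → ℝ → ℝ × ℝ × ℝ)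
    (hP : ∀ s t, P s t = r s + u s t • T s + v s t • N s + w s t • B s)
    (hn : ∀ s t, n s t = lcross (deriv (fun σ => P σ t) s) (deriv (fun t' => P s t') t))
    (h0 : ∀ s, u s t₀ = 0 ∧ v s t₀ = 0 ∧ w s t₀ = 0)
    (θ₀ : ℝ) (θ : ℝ → ℝ) (hθ : ∀ s, θ s = θ₀ - ∫ σ in (0:ℝ)..s, τ σ)
    (n₁ : ℝ → ℝ × ℝ × ℝ)
    (hn₁ : ∀ s, n₁ s = Real.cosh (θ s) • N s + Real.sinh (θ s) • B s) :
    (∀ s, ∃ c : ℝ, c ≠ 0 ∧ n s t₀ = c • n₁ s) ↔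
      (∃ lam : ℝ → ℝ, (∀ s, lam s ≠ 0) ∧ ∀ s,
        (deriv (fun σ => v σ t₀) s * deriv (fun t => w s t) t₀ - deriv (fun σ => w σ t₀) s * deriv (fun t => v s t) t₀) = 0 ∧
        (-((1 + deriv (fun σ => u σ t₀) s) * deriv (fun t => w s t) t₀) + deriv (fun σ => w σ t₀) s * deriv (fun t => u s t) t₀) = lam s * Real.cosh (θ s) ∧
        (-((1 + deriv (fun σ => u σ t₀) s) * deriv (fun t => v s t) t₀) + deriv (fun σ => v σ t₀) s * deriv (fun t => u s t) t₀) = lam s * Real.sinh (θ s)) := by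
  -- derivatives in s at t₀ of the marching functions all vanish
  have hus : ∀ s, deriv (fun σ => u σ t₀) s = 0 := by
    intro s
    have : (fun σ => u σ t₀) = fun _ => (0:ℝ) := funext fun σ => (h0 σ).1
    rw [this, deriv_const]
  have hvs : ∀ s, deriv (fun σ => v σ t₀) s = 0 := by
    intro s
    have : (fun σ => v σ t₀) = fun _ => (0:ℝ) := funext fun σ => (h0 σ).2.1
    rw [this, deriv_const]
  have hws : ∀ s, deriv (fun σ => w σ t₀) s = 0 := by
    intro s
    have : (fun σ => w σ t₀) = fun _ => (0:ℝ) := funext fun σ => (h0 σ).2.2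
    rw [this, deriv_const]
  -- the s-derivative of P at t₀ is T
  have hPr : (fun σ => P σ t₀) = r := by
    funext σ
    rw [hP]
    rcases h0 σ with ⟨h1, h2, h3⟩
    rw [h1, h2, h3]
    simp
  -- differentiability in t
  have hu' : ∀ s, Differentiable ℝ fun t => u s t := fun s =>
    (hu.differentiable (by simp)).comp ((differentiable_const s).prodMk differentiable_id)
  have hv' : ∀ s, Differentiable ℝ fun t => v s t := fun s =>
    (hv.differentiable (by simp)).comp ((differentiable_const s).prodMk differentiable_id)
  have hw' : ∀ s, Differentiable ℝ fun t => w s t := fun s =>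
    (hw.differentiable (by simp)).comp ((differentiable_const s).prodMk differentiable_id)
  -- key formula for the normal along the curve
  have key : ∀ s, n s t₀ =
      (-(deriv (fun t => w s t) t₀)) • N s + (-(deriv (fun t => v s t) t₀)) • B s := by
    intro s
    set ut := deriv (fun t => u s t) t₀
    set vt := deriv (fun t => v s t) t₀
    set wt := deriv (fun t => w s t) t₀
    have hPt : (fun t' => P s t') = fun t' =>
        r s + u s t' • T s + v s t' • N s + w s t' • B s := funext fun t' => hP s t'
    have hD : HasDerivAt (fun t' => P s t') (ut • T s + vt • N s + wt • B s) t₀ := by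
      rw [hPt]
      exact (((((hu' s) t₀).hasDerivAt.smul_const (T s)).const_add (r s)).add
        (((hv' s) t₀).hasDerivAt.smul_const (N s))).add
        (((hw' s) t₀).hasDerivAt.smul_const (B s))
    have h2 : deriv (fun t' => P s t') t₀ = ut • T s + vt • N s + wt • B s := hD.deriv
    have h1 : deriv (fun σ => P σ t₀) s = T s := by rw [hPr, hrT]
    have hTB' : lcross (T s) (B s) = -(N s) := by rw [lcross_anti, hBxT]
    rw [hn, h1, h2, lcross_comb, hTxN s, hTB']
    module
  constructor
  · intro h
    choose c hc0 hc using h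
    refine ⟨c, hc0, fun s => ?_⟩
    set ut := deriv (fun t => u s t) t₀
    set vt := deriv (fun t => v s t) t₀
    set wt := deriv (fun t => w s t) t₀
    have heq : (-wt) • N s + (-vt) • B s =
        (c s * Real.cosh (θ s)) • N s + (c s * Real.sinh (θ s)) • B s := by
      rw [← key s, hc, hn₁]
      module
    have e1 := congrArg (fun V => minkDot V (N s)) heq
    have e2 := congrArg (fun V => minkDot V (B s)) heq
    have eNB : minkDot (B s) (N s) = 0 := (minkDot_symm _ _).trans (hNB s)
    simp only [minkDot_comb, hNN s, hNB s, hBB s, eNB] at e1 e2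
    refine ⟨by rw [hvs, hws]; ring, ?_, ?_⟩
    · simp only [hus, hws]; nlinarith [e1]
    · simp only [hus, hvs]; nlinarith [e2]
  · rintro ⟨lam, hlam, hcond⟩ s
    refine ⟨lam s, hlam s, ?_⟩
    obtain ⟨-, h2, h3⟩ := hcond s
    simp only [hus, hvs, hws] at h2 h3
    have h2' : -(deriv (fun t => w s t) t₀) = lam s * Real.cosh (θ s) := by linarith
    have h3' : -(deriv (fun t => v s t) t₀) = lam s * Real.sinh (θ s) := by linarith
    rw [key s, h2', h3', hn₁]
    module
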